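/- Let d ≥ 2 and let p, k be natural numbers with 1 ≤ p < k and k + p odd, and set α = (k+p−1)/2 and β = (k−p−1)/2. If x ∈ T and y ∈ S, then |y₁ − p − x₁| + ∑_{i=2}^d |y_i − x_i| ≤ k; in particular x ∈ N(y,p,k). -/

import Mathlib

open Finset

/-- The L1 norm on the integer lattice `Fin d → ℤ`. -/
def norm1 {d : ℕ} (x : Fin d → ℤ) : ℤ := ∑ i, |x i|

/-- The first standard basis vector of `Fin d → ℤ`. -/
def e1 {d : ℕ} : Fin d → ℤ := fun i => if (i : ℕ) = 0 then 1 else 0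

/-- `inN p k x y` means `y` belongs to the displaced distance-`k` neighborhood `N(x, p, k)`,
i.e. `‖y − (x + p·e₁)‖₁ ≤ k` or `‖y − (x − p·e₁)‖₁ ≤ k`. -/
def inN {d : ℕ} (p k : ℕ) (x y : Fin d → ℤ) : Prop :=
  norm1 (y - (x + (p : ℤ) • e1)) ≤ (k : ℤ) ∨ norm1 (y - (x - (p : ℤ) • e1)) ≤ (k : ℤ)


/-- `∑_{i=2}^d |x_i|` : the sum of absolute values of all but the first coordinate. -/
def tailSum {d : ℕ} (x : Fin d → ℤ) : ℤ :=
  ∑ i ∈ Finset.univ.filter (fun i : Fin d => (i : ℕ) ≠ 0), |x i|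


/-- The `j`-th coordinate (0-indexed) of a lattice point, or `0` if out of range. -/
def coord {d : ℕ} (x : Fin d → ℤ) (j : ℕ) : ℤ := if h : j < d then x ⟨j, h⟩ else 0


/-- The set `T = { x : −(p−1) ≤ x₁ ≤ p, 1 ≤ x₂ ≤ β, and ∑_{i=2}^d |x_i| = β+1 }`. -/
def Tset (d : ℕ) (p β : ℤ) : Set (Fin d → ℤ) :=
  {x | -(p - 1) ≤ coord x 0 ∧ coord x 0 ≤ p ∧ 1 ≤ coord x 1 ∧ coord x 1 ≤ β ∧
       tailSum x = β + 1}


/-- The set `S = { x : p+1 ≤ x₁ ≤ α+1, |x₂| ≤ β, and ‖x‖₁ = α+1 }`. -/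
def Sset (d : ℕ) (p α β : ℤ) : Set (Fin d → ℤ) :=
  {x | p + 1 ≤ coord x 0 ∧ coord x 0 ≤ α + 1 ∧ |coord x 1| ≤ β ∧ norm1 x = α + 1}

/-!
Splitting the L1 norm as `|x₁| + ∑_{i≥2} |xᵢ|`, the triangle inequality on the tail gives
`∑_{i≥2} |yᵢ − xᵢ| ≤ (α + 1 − y₁) + (β + 1)` for `x ∈ T`, `y ∈ S`. Since `α + β = k − 1`, what
remains is `|y₁ − p − x₁| ≤ y₁ − 1`, which holds because `1 − p ≤ x₁ ≤ p` and `y₁ ≥ p + 1`.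
The same quantity is `‖x − (y − p·e₁)‖₁`, because shifting along `e₁` leaves the tail unchanged.
-/

section Lattice

variable {d : ℕ}

lemma coord_add (x y : Fin d → ℤ) (j : ℕ) : coord (x + y) j = coord x j + coord y j := by
  unfold coord; split_ifs <;> simp

lemma coord_sub (x y : Fin d → ℤ) (j : ℕ) : coord (x - y) j = coord x j - coord y j := by
  unfold coord; split_ifs <;> simp

lemma coord_smul_e1_zero (hd : 0 < d) (c : ℤ) : coord (c • e1 : Fin d → ℤ) 0 = c := by
  simp [coord, hd, e1]

lemma lt_of_coord_ne_zero {x : Fin d → ℤ} {j : ℕ} (h : coord x j ≠ 0) : j < d := by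
  by_contra hj
  exact h (dif_neg hj)

lemma norm1_eq_abs_coord_zero_add_tailSum (x : Fin d → ℤ) :
    norm1 x = |coord x 0| + tailSum x := by
  rcases Nat.eq_zero_or_pos d with rfl | hd
  · simp [norm1, tailSum, coord]
  have hfirst : univ.filter (fun i : Fin d => (i : ℕ) = 0) = {⟨0, hd⟩} := by
    ext i; simp [Fin.ext_iff]
  rw [norm1, ← sum_filter_add_sum_filter_not univ (fun i : Fin d => (i : ℕ) = 0), hfirst,
    sum_singleton, tailSum, coord, dif_pos hd]

lemma tailSum_sub_le (x y : Fin d → ℤ) : tailSum (x - y) ≤ tailSum x + tailSum y := by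
  rw [tailSum, tailSum, tailSum, ← sum_add_distrib]
  exact sum_le_sum fun i _ => abs_sub (x i) (y i)

lemma tailSum_sub_comm (x y : Fin d → ℤ) : tailSum (x - y) = tailSum (y - x) :=
  sum_congr rfl fun i _ => abs_sub_comm (x i) (y i)

lemma tailSum_add_smul_e1 (x : Fin d → ℤ) (c : ℤ) : tailSum (x + c • e1) = tailSum x :=
  sum_congr rfl fun i hi => by simp [e1, (mem_filter.mp hi).2]

lemma norm1_sub_sub_smul_e1 (hd : 0 < d) (x y : Fin d → ℤ) (c : ℤ) :
    norm1 (x - (y - c • e1)) = |coord y 0 - c - coord x 0| + tailSum (y - x) := by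
  have hshift : x - (y - c • e1) = (x - y) + c • e1 := by abel
  rw [hshift, norm1_eq_abs_coord_zero_add_tailSum, tailSum_add_smul_e1, tailSum_sub_comm,
    coord_add, coord_sub, coord_smul_e1_zero hd, ← abs_neg]
  ring_nf

end Lattice

lemma tailSum_of_mem_Sset {d : ℕ} {p α β : ℤ} (hp : 0 ≤ p) {y : Fin d → ℤ}
    (hy : y ∈ Sset d p α β) : tailSum y = α + 1 - coord y 0 := by
  obtain ⟨hy₁, -, -, hnorm⟩ := hy
  rw [norm1_eq_abs_coord_zero_add_tailSum, abs_of_pos (by linarith)] at hnorm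
  linarith

theorem stmt15_general (d : ℕ) (p k : ℕ)
    (α β : ℤ) (hα : 2 * α = (k : ℤ) + (p : ℤ) - 1) (hβ : 2 * β = (k : ℤ) - (p : ℤ) - 1)
    (x y : Fin d → ℤ) (hx : x ∈ Tset d (p : ℤ) β) (hy : y ∈ Sset d (p : ℤ) α β) :
    |coord y 0 - (p : ℤ) - coord x 0| + tailSum (y - x) ≤ (k : ℤ) ∧ inN p k y x := by
  have hty := tailSum_of_mem_Sset (Int.natCast_nonneg p) hy
  obtain ⟨hx₁, hx₁', -, -, htx⟩ := hx
  have hy₁ := hy.1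
  have hd : 0 < d := lt_of_coord_ne_zero (by omega : coord y 0 ≠ 0)
  have hdist : |coord y 0 - (p : ℤ) - coord x 0| + tailSum (y - x) ≤ (k : ℤ) := by
    have htail := tailSum_sub_le y x
    rcases abs_cases (coord y 0 - (p : ℤ) - coord x 0) with ⟨habs, -⟩ | ⟨habs, -⟩ <;>
      rw [habs] <;> linarith
  exact ⟨hdist, Or.inr ((norm1_sub_sub_smul_e1 hd x y p).trans_le hdist)⟩

/-- If `d ≥ 2`, `1 ≤ p < k`, `k + p` is odd, `α = (k+p−1)/2` and `β = (k−p−1)/2`, then for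
`x ∈ T` and `y ∈ S` we have `|y₁ − p − x₁| + ∑_{i=2}^d |y_i − x_i| ≤ k`; in particular
`x ∈ N(y, p, k)`. -/
theorem stmt15 (d : ℕ) (hd : 2 ≤ d) (p k : ℕ) (hp : 1 ≤ p) (hpk : p < k)
    (hodd : Odd (k + p))
    (α β : ℤ) (hα : 2 * α = (k : ℤ) + (p : ℤ) - 1) (hβ : 2 * β = (k : ℤ) - (p : ℤ) - 1)
    (x y : Fin d → ℤ) (hx : x ∈ Tset d (p : ℤ) β) (hy : y ∈ Sset d (p : ℤ) α β) :
    |coord y 0 - (p : ℤ) - coord x 0| + tailSum (y - x) ≤ (k : ℤ) ∧ inN p k y x :=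
  stmt15_general d p k α β hα hβ x y hx hy
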